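/- arXiv:2407.21634 — 3 statements merged into one kernel-verified Lean document; each statement's English description precedes it below -/
import Mathlib

section
/- Suppose {α_k}_{k∈ℕ} is a sequence of positive reals and the index set ℕ is partitioned as K_s ∪ K_u, where α_{k+1} = φ α_k for k ∈ K_s and α_{k+1} = θ α_k for k ∈ K_u, with φ ≥ 1 and θ ∈ (0,1). If α_k → 0 along K_s (in case K_s is infinite) and, in case K_s is finite, K_u contains all sufficiently large indices, then the full sequence α_k → 0, provided additionally that (when K_s is infinite) lim_{k→∞, k∈K_s} α_k = 0. -/
/-!
If `K_s` is finite, then eventually `α (k + 1) = θ * α k`, which is geometric decay. Otherwise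
`|α|` can only decrease between two successful iterations, so `|α k| ≤ |α (j + 1)| = |φ * α j|`
for the last successful `j < k`, and these bounds tend to zero.
-/

open Filter

theorem tendsto_zero_of_norm_succ_le_of_tendsto_succ_on {E : Type*} [SeminormedAddCommGroup E]
    {f : ℕ → E} {s : Set ℕ} (hs : s.Infinite) (hle : ∀ k ∉ s, ‖f (k + 1)‖ ≤ ‖f k‖)
    (hlim : Tendsto (fun k => f (k + 1)) (atTop ⊓ 𝓟 s) (nhds 0)) :
    Tendsto f atTop (nhds 0) := by
  rw [Metric.tendsto_atTop]
  intro ε hε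
  have hsmall : ∀ᶠ k in atTop ⊓ 𝓟 s, ‖f (k + 1)‖ < ε :=
    (tendsto_zero_iff_norm_tendsto_zero.mp hlim).eventually (gt_mem_nhds hε)
  obtain ⟨N, hN⟩ := eventually_atTop.mp (eventually_inf_principal.mp hsmall)
  obtain ⟨j, hjs, hjN⟩ := hs.exists_gt N
  refine ⟨j + 1, fun k hk => ?_⟩
  rw [dist_zero_right]
  induction k, hk using Nat.le_induction with
  | base => exact hN j hjN.le hjs
  | succ k hk ih =>
    by_cases hks : k ∈ s
    · exact hN k (by omega) hks
    · exact (hle k hks).trans_lt ih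

theorem stmt_6_general (α : ℕ → ℝ) (φ θ : ℝ) (Ks : Set ℕ)
    (hθ0 : 0 < θ) (hθ1 : θ < 1)
    (hupd : ∀ k : ℕ, (k ∈ Ks → α (k + 1) = φ * α k) ∧ (k ∉ Ks → α (k + 1) = θ * α k))
    (hcase : Ks.Finite ∨ (Ks.Infinite ∧
      Tendsto (fun k => α k) (atTop ⊓ Filter.principal Ks) (nhds 0))) :
    Tendsto α atTop (nhds 0) := by
  have hnorm_off : ∀ k ∉ Ks, ‖α (k + 1)‖ = ‖θ‖ * ‖α k‖ := fun k hk => by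
    rw [(hupd k).2 hk, norm_mul]
  have hθ : ‖θ‖ < 1 := by rwa [Real.norm_of_nonneg hθ0.le]
  rcases hcase with hfin | ⟨hinf, hlim⟩
  · have hoff : ∀ᶠ k in atTop, k ∉ Ks := Nat.cofinite_eq_atTop ▸ hfin.eventually_cofinite_notMem
    refine (summable_of_ratio_norm_eventually_le hθ ?_).tendsto_atTop_zero
    filter_upwards [hoff] with k hk
    exact (hnorm_off k hk).le
  · refine tendsto_zero_of_norm_succ_le_of_tendsto_succ_on hinf
      (fun k hk => (hnorm_off k hk).trans_le (mul_le_of_le_one_left (norm_nonneg _) hθ.le)) ?_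
    have hon : ∀ᶠ k in atTop ⊓ 𝓟 Ks, φ * α k = α (k + 1) :=
      eventually_inf_principal.mpr (.of_forall fun k hk => ((hupd k).1 hk).symm)
    simpa using (hlim.const_mul φ).congr' hon

theorem stmt_6 (α : ℕ → ℝ) (φ θ : ℝ) (Ks : Set ℕ)
    (hφ : 1 ≤ φ) (hθ0 : 0 < θ) (hθ1 : θ < 1)
    (hα0 : 0 < α 0)
    (hupd : ∀ k : ℕ, (k ∈ Ks → α (k + 1) = φ * α k) ∧ (k ∉ Ks → α (k + 1) = θ * α k))
    (hcase : Ks.Finite ∨ (Ks.Infinite ∧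
      Tendsto (fun k => α k) (atTop ⊓ Filter.principal Ks) (nhds 0))) :
    Tendsto α atTop (nhds 0) :=
  stmt_6_general α φ θ Ks hθ0 hθ1 hupd hcase
end

section
/- Let Z : D → ℝ be a function on D ⊆ ℝⁿ bounded below, {x_k} ⊆ D, and {α_k} positive reals with update rules α_{k+1} = φα_k when Z(x_{k+1}) ≤ Z(x_k) − ξ(α_k) (and x_{k+1} ≠ x_k), α_{k+1} = θα_k and x_{k+1} = x_k otherwise, where φ ≥ 1, θ ∈ (0,1), and ξ : [0,∞) → [0,∞) is a continuous nondecreasing forcing function satisfying ξ(t)/t → 0 as t ↓ 0 and (ξ(t_k) → 0 ⟹ t_k → 0). Then α_k → 0. -/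
open Filter

theorem stmt_7 (n : ℕ) (D : Set (EuclideanSpace ℝ (Fin n)))
    (Z : EuclideanSpace ℝ (Fin n) → ℝ)
    (x : ℕ → EuclideanSpace ℝ (Fin n)) (α : ℕ → ℝ)
    (φ θ : ℝ) (hφ : 1 ≤ φ) (hθ0 : 0 < θ) (hθ1 : θ < 1)
    (ξ : ℝ → ℝ)
    (hξcont : ContinuousOn ξ (Set.Ici 0))
    (hξmono : MonotoneOn ξ (Set.Ici 0))
    (hξnonneg : ∀ t : ℝ, 0 ≤ t → 0 ≤ ξ t)
    (hξratio : Tendsto (fun t => ξ t / t) (nhdsWithin 0 (Set.Ioi 0)) (nhds 0))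
    (hξforce : ∀ t : ℕ → ℝ, (∀ k, 0 ≤ t k) →
      Tendsto (fun k => ξ (t k)) atTop (nhds 0) → Tendsto t atTop (nhds 0))
    (hbdd : ∃ B : ℝ, ∀ y ∈ D, B ≤ Z y)
    (hxD : ∀ k, x k ∈ D)
    (hα : ∀ k, 0 < α k)
    (hupd : ∀ k : ℕ,
      (Z (x (k + 1)) ≤ Z (x k) - ξ (α k) ∧ α (k + 1) = φ * α k) ∨
      (x (k + 1) = x k ∧ α (k + 1) = θ * α k)) :
    Tendsto α atTop (nhds 0) := by
  classical
  obtain ⟨B, hB⟩ := hbdd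
  have hφ0 : (0:ℝ) < φ := lt_of_lt_of_le one_pos hφ
  have hξpos : ∀ t : ℝ, 0 < t → 0 < ξ t := by
    intro t ht
    rcases lt_or_eq_of_le (hξnonneg t ht.le) with h | h
    · exact h
    · exfalso
      have h1 := hξforce (fun _ => t) (fun _ => ht.le)
        (by simpa [← h] using (tendsto_const_nhds : Tendsto (fun _ : ℕ => ξ t) atTop _))
      have : t = (0 : ℝ) := tendsto_nhds_unique (tendsto_const_nhds : Tendsto (fun _ : ℕ => t) atTop (nhds t)) h1
      exact ht.ne' this
  have hZstep : ∀ k, Z (x (k+1)) ≤ Z (x k) := by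
    intro k
    rcases hupd k with ⟨h1, _⟩ | ⟨h1, _⟩
    · have := hξnonneg (α k) (hα k).le
      linarith
    · rw [h1]
  have hZanti : Antitone fun k => Z (x k) := antitone_nat_of_succ_le hZstep
  have hbdd' : BddBelow (Set.range fun k => Z (x k)) :=
    ⟨B, by rintro _ ⟨k, rfl⟩; exact hB _ (hxD k)⟩
  have hL : Tendsto (fun k => Z (x k)) atTop (nhds (⨅ k, Z (x k))) :=
    tendsto_atTop_ciInf hZanti hbdd'
  have hg : Tendsto (fun k => Z (x k) - Z (x (k+1))) atTop (nhds 0) := by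
    have h2 : Tendsto (fun k => Z (x (k+1))) atTop (nhds (⨅ k, Z (x k))) :=
      hL.comp (tendsto_add_atTop_nat 1)
    simpa using hL.sub h2
  rw [Metric.tendsto_atTop]
  intro ε hε
  set δ := ξ (θ * ε / φ) with hδdef
  have hδpos : 0 < δ := hξpos _ (by positivity)
  obtain ⟨N, hN⟩ := Metric.tendsto_atTop.mp hg δ hδpos
  have hkey : ∀ k, N ≤ k → (Z (x (k + 1)) ≤ Z (x k) - ξ (α k) ∧ α (k + 1) = φ * α k) →
      α (k+1) < θ * ε := by
    rintro k hk ⟨h1, h2⟩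
    have hgk : Z (x k) - Z (x (k+1)) < δ := by
      have := hN k hk
      rw [Real.dist_eq, sub_zero] at this
      exact lt_of_abs_lt this
    have hξαk : ξ (α k) < δ := by linarith
    have hαk : α k < θ * ε / φ := by
      by_contra hcon
      push_neg at hcon
      have := hξmono (Set.mem_Ici.mpr (by positivity : (0:ℝ) ≤ θ * ε / φ))
        (Set.mem_Ici.mpr (hα k).le) hcon
      exact absurd hξαk (not_lt.mpr this)
    calc α (k+1) = φ * α k := h2
      _ < φ * (θ * ε / φ) := mul_lt_mul_of_pos_left hαk hφ0
      _ = θ * ε := by field_simp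
  have hθε : θ * ε < ε := by nlinarith
  by_cases hsucc : ∃ k1, N ≤ k1 ∧
      (Z (x (k1 + 1)) ≤ Z (x k1) - ξ (α k1) ∧ α (k1 + 1) = φ * α k1)
  · obtain ⟨k1, hk1N, hS⟩ := hsucc
    have hall : ∀ m, α (k1 + 1 + m) < ε := by
      intro m
      induction m with
      | zero => simpa using (hkey k1 hk1N hS).trans hθε
      | succ m ih =>
        have hk : N ≤ k1 + 1 + m := by omega
        rcases hupd (k1 + 1 + m) with hS' | ⟨_, h2⟩
        · exact (hkey _ hk hS').trans hθε
        · show α (k1 + 1 + m + 1) < ε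
          rw [h2]
          nlinarith [(hα (k1+1+m)).le]
    refine ⟨k1 + 1, fun n hn => ?_⟩
    obtain ⟨m, rfl⟩ := Nat.exists_eq_add_of_le hn
    rw [Real.dist_eq, sub_zero, abs_of_pos (hα _)]
    exact hall m
  · push_neg at hsucc
    have hθstep : ∀ k, N ≤ k → α (k+1) = θ * α k := by
      intro k hk
      rcases hupd k with hS | ⟨_, h2⟩
      · exact absurd hS.2 (hsucc k hk hS.1)
      · exact h2
    have hform : ∀ m, α (N + m) = θ ^ m * α N := by
      intro m
      induction m with
      | zero => simp
      | succ m ih =>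
        rw [show N + (m+1) = (N + m) + 1 from rfl, hθstep _ (by omega), ih,
          pow_succ]
        ring
    have ht : Tendsto (fun m => θ ^ m * α N) atTop (nhds 0) := by
      simpa using (tendsto_pow_atTop_nhds_zero_of_lt_one hθ0.le hθ1).mul_const (α N)
    obtain ⟨M, hM⟩ := Metric.tendsto_atTop.mp ht ε hε
    refine ⟨N + M, fun n hn => ?_⟩
    obtain ⟨m, rfl⟩ := Nat.exists_eq_add_of_le (le_trans (Nat.le_add_right N M) hn)
    rw [hform m]
    exact hM m (by omega)
end

section
/- Let g : ℝⁿ → ℝ be Lipschitz continuous with constant L, and let x_k → x*, y_k = x_k + t_k α_k d_k with t_k ∈ (0,1), ‖d_k‖ = 1, where g(x_k) < 0, g(y_k) < 0 for all k, and α_k ≤ c·g(x_k)² for a constant c > 0. If additionally −g(x_k) ≥ −g(y_k), then limsup_k (−g(x_k))/(−g(y_k)) ≤ 1; more precisely, −g(y_k) ≥ −g(x_k) − L t_k α_k ≥ −g(x_k) − L c g(x_k)², and hence if g(x_k) → 0 then (−g(x_k))/(−g(y_k)) → 1. -/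
/-! Along the segment from `x` to `y` the Lipschitz bound gives
`-g y ≥ -g x - L‖y - x‖ ≥ -g x - L c g(x)²`, so `1 - L c (-g x) ≤ (-g y)/(-g x) ≤ 1`, and the
lower bound tends to `1` as `g x → 0`. -/

open Filter

theorem LipschitzWith.apply_add_smul_le {E : Type*} [SeminormedAddCommGroup E] [NormedSpace ℝ E]
    {K : NNReal} {g : E → ℝ} (hg : LipschitzWith K g) (x d : E) {s : ℝ} (hs : 0 ≤ s)
    (hd : ‖d‖ = 1) : g (x + s • d) ≤ g x + K * s := by
  have hdist : dist (x + s • d) x = s := by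
    rw [dist_eq_norm, add_sub_cancel_left, norm_smul, hd, mul_one, Real.norm_of_nonneg hs]
  have h := hg.dist_le_mul (x + s • d) x
  rw [hdist, Real.dist_eq] at h
  linarith [le_abs_self (g (x + s • d) - g x)]

theorem tendsto_div_one_of_sub_mul_sq_le {a b : ℕ → ℝ} {C : ℝ} (ha : ∀ k, 0 < a k)
    (hba : ∀ k, b k ≤ a k) (hab : ∀ k, a k - C * a k ^ 2 ≤ b k)
    (ha0 : Tendsto a atTop (nhds 0)) : Tendsto (fun k => a k / b k) atTop (nhds 1) := by
  have hlower : Tendsto (fun k => 1 - C * a k) atTop (nhds 1) := by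
    simpa using tendsto_const_nhds.sub (ha0.const_mul C)
  have hratio : Tendsto (fun k => b k / a k) atTop (nhds 1) := by
    refine tendsto_of_tendsto_of_tendsto_of_le_of_le hlower tendsto_const_nhds
      (fun k => ?_) (fun k => (div_le_one (ha k)).mpr (hba k))
    rw [le_div_iff₀ (ha k)]
    linarith [hab k]
  simpa only [inv_div, inv_one] using hratio.inv₀ one_ne_zero

theorem stmt_14_general (n : ℕ) (g : EuclideanSpace ℝ (Fin n) → ℝ) (L c : ℝ)
    (hL : 0 ≤ L)
    (hlip : LipschitzWith (Real.toNNReal L) g)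
    (x y d : ℕ → EuclideanSpace ℝ (Fin n)) (t α : ℕ → ℝ)
    (ht : ∀ k, t k ∈ Set.Ioo (0 : ℝ) 1)
    (hd : ∀ k, ‖d k‖ = 1)
    (hy : ∀ k, y k = x k + (t k * α k) • d k)
    (hgx : ∀ k, g (x k) < 0)
    (hα : ∀ k, 0 < α k) (hαbound : ∀ k, α k ≤ c * g (x k) ^ 2)
    (hord : ∀ k, -g (y k) ≤ -g (x k))
    (hgx0 : Tendsto (fun k => g (x k)) atTop (nhds 0)) :
    (∀ k, -g (x k) - L * (t k * α k) ≤ -g (y k)) ∧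
    Tendsto (fun k => (-g (x k)) / (-g (y k))) atTop (nhds 1) := by
  have hstep : ∀ k, -g (x k) - L * (t k * α k) ≤ -g (y k) := fun k => by
    have h := hlip.apply_add_smul_le (x k) (d k)
      (mul_nonneg (ht k).1.le (hα k).le) (hd k)
    rw [Real.coe_toNNReal L hL, ← hy k] at h
    linarith
  refine ⟨hstep, tendsto_div_one_of_sub_mul_sq_le (C := L * c) (fun k => neg_pos.mpr (hgx k))
    hord (fun k => ?_) (by simpa using hgx0.neg)⟩
  have hstep_le : t k * α k ≤ c * g (x k) ^ 2 :=
    (mul_le_of_le_one_left (hα k).le (ht k).2.le).trans (hαbound k)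
  linarith [hstep k, mul_le_mul_of_nonneg_left hstep_le hL]

theorem stmt_14 (n : ℕ) (g : EuclideanSpace ℝ (Fin n) → ℝ) (L c : ℝ)
    (hL : 0 ≤ L) (hc : 0 < c)
    (hlip : LipschitzWith (Real.toNNReal L) g)
    (x y d : ℕ → EuclideanSpace ℝ (Fin n)) (t α : ℕ → ℝ)
    (xstar : EuclideanSpace ℝ (Fin n))
    (hconv : Tendsto x atTop (nhds xstar))
    (ht : ∀ k, t k ∈ Set.Ioo (0 : ℝ) 1)
    (hd : ∀ k, ‖d k‖ = 1)
    (hy : ∀ k, y k = x k + (t k * α k) • d k)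
    (hgx : ∀ k, g (x k) < 0) (hgy : ∀ k, g (y k) < 0)
    (hα : ∀ k, 0 < α k) (hαbound : ∀ k, α k ≤ c * g (x k) ^ 2)
    (hord : ∀ k, -g (y k) ≤ -g (x k))
    (hgx0 : Tendsto (fun k => g (x k)) atTop (nhds 0)) :
    (∀ k, -g (x k) - L * (t k * α k) ≤ -g (y k)) ∧
    Tendsto (fun k => (-g (x k)) / (-g (y k))) atTop (nhds 1) :=
  stmt_14_general n g L c hL hlip x y d t α ht hd hy hgx hα hαbound hord hgx0
end
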